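/- arXiv:2403.07753 — 2 statements merged into one kernel-verified Lean document; each statement's English description precedes it below -/
import Mathlib

section
/- Suppose for some index j in the same class as i (y_i = y_j) the margin constraint y_j(w·x_j + b) ≥ 1 − ξ_j holds with 0 ≤ ξ_j ≤ 2. Then 1 − y_i(w·x_i + b) ≤ 2 + ‖x_i − x_j‖_q · ‖w‖_p, where 1/p + 1/q = 1. -/
open Finset

theorem Real.mul_inner_le_Lp_mul_Lq_of_abs_eq_one {ι : Type*} (s : Finset ι) (f g : ι → ℝ)
    {c p q : ℝ} (hc : |c| = 1) (hpq : p.HolderConjugate q) :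
    c * ∑ i ∈ s, f i * g i ≤ (∑ i ∈ s, |f i| ^ p) ^ (1 / p) * (∑ i ∈ s, |g i| ^ q) ^ (1 / q) := by
  have h := Real.inner_le_Lp_mul_Lq s (fun i ↦ c * f i) g hpq
  simpa only [abs_mul, hc, one_mul, mul_assoc, ← Finset.mul_sum] using h

theorem bigM_core_estimate_general
    (d : ℕ) (p q : ℝ) (hpq : Real.HolderConjugate p q)
    (w xi xj : Fin d → ℝ) (b : ℝ) (yi yj ξj : ℝ)
    (hyi : yi = -1 ∨ yi = 1) (hclass : yi = yj)
    (hmargin : yj * (∑ k, w k * xj k + b) ≥ 1 - ξj)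
    (hξ2 : ξj ≤ 2) :
    1 - yi * (∑ k, w k * xi k + b) ≤
      2 + (∑ k, |xi k - xj k| ^ q) ^ (1 / q) * (∑ k, |w k| ^ p) ^ (1 / p) := by
  subst hclass
  have hsign : |-yi| = 1 := by rcases hyi with rfl | rfl <;> norm_num
  have hshift : yi * (∑ k, w k * xj k + b) - yi * (∑ k, w k * xi k + b) =
      -yi * ∑ k, (xi k - xj k) * w k := by
    simp only [sub_mul, Finset.sum_sub_distrib, mul_comm (w _)]
    ring
  have hholder := Real.mul_inner_le_Lp_mul_Lq_of_abs_eq_one univ (fun k ↦ xi k - xj k) w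
    hsign hpq.symm
  linarith

/-- If a same-class point j satisfies its margin constraint with 0 ≤ ξ_j ≤ 2, then
1 − y_i(w·x_i + b) ≤ 2 + ‖x_i − x_j‖_q · ‖w‖_p. -/
theorem bigM_core_estimate
    (d : ℕ) (p q : ℝ) (hpq : Real.HolderConjugate p q)
    (w xi xj : Fin d → ℝ) (b : ℝ) (yi yj ξj : ℝ)
    (hyi : yi = -1 ∨ yi = 1) (hyj : yj = -1 ∨ yj = 1) (hclass : yi = yj)
    (hmargin : yj * (∑ k, w k * xj k + b) ≥ 1 - ξj)
    (hξ0 : 0 ≤ ξj) (hξ2 : ξj ≤ 2) :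
    1 - yi * (∑ k, w k * xi k + b) ≤
      2 + (∑ k, |xi k - xj k| ^ q) ^ (1 / q) * (∑ k, |w k| ^ p) ^ (1 / p) :=
  bigM_core_estimate_general d p q hpq w xi xj b yi yj ξj hyi hclass hmargin hξ2
end

section
/- Let t ∈ ℝ and M ≥ 1 − t. Then the optimal value of min{ξ + 2z : ξ ∈ [0,2], z ∈ {0,1}, t ≥ 1 − ξ − M z, ξ ≤ 2(1 − z)} equals the ramp loss min(2, max(0, 1 − t)). -/
/-!
With `z = 0` the constraints reduce to `ξ ≥ max 0 (1 - t)`, so the best value is `max 0 (1 - t)`;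
with `z = 1` the strengthening forces `ξ = 0`, the value is `2`, and `M ≥ 1 - t` is exactly what
makes this point feasible. The optimum is the smaller of the two.
-/

lemma ramp_loss_le_of_bigM_feasible {t M ξ z : ℝ} (hξ : 0 ≤ ξ) (hz : z = 0 ∨ z = 1)
    (ht : t ≥ 1 - ξ - M * z) (hstrong : ξ ≤ 2 * (1 - z)) :
    min 2 (max 0 (1 - t)) ≤ ξ + 2 * z := by
  rcases hz with rfl | rfl
  · calc min 2 (max 0 (1 - t)) ≤ max 0 (1 - t) := min_le_right _ _
      _ ≤ ξ + 2 * 0 := max_le (by linarith) (by linarith)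
  · have hξ0 : ξ = 0 := le_antisymm (by linarith) hξ
    calc min 2 (max 0 (1 - t)) ≤ 2 := min_le_left _ _
      _ = ξ + 2 * 1 := by rw [hξ0]; norm_num

lemma exists_bigM_feasible_eq_ramp_loss {t M : ℝ} (hM : M ≥ 1 - t) :
    ∃ ξ z : ℝ, 0 ≤ ξ ∧ ξ ≤ 2 ∧ (z = 0 ∨ z = 1) ∧ t ≥ 1 - ξ - M * z ∧ ξ ≤ 2 * (1 - z) ∧
      min 2 (max 0 (1 - t)) = ξ + 2 * z := by
  rcases le_or_gt (1 - t) 2 with hle | hgt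
  · have hmax : max 0 (1 - t) ≤ 2 := max_le zero_le_two hle
    refine ⟨max 0 (1 - t), 0, le_max_left _ _, hmax, .inl rfl, ?_, by linarith, ?_⟩
    · linarith [le_max_right 0 (1 - t)]
    · rw [min_eq_right hmax]; ring
  · have hmax : 2 ≤ max 0 (1 - t) := le_max_of_le_right hgt.le
    refine ⟨0, 1, le_rfl, zero_le_two, .inr rfl, by linarith, by norm_num, ?_⟩
    rw [min_eq_left hmax]; norm_num

/-- If M ≥ 1 − t, the big-M formulation with the strengthening ξ ≤ 2(1 − z) has
optimal value equal to the ramp loss min(2, max(0, 1 − t)). -/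
theorem ramp_loss_bigM_exact (t M : ℝ) (hM : M ≥ 1 - t) :
    IsLeast {val : ℝ | ∃ ξ z : ℝ, 0 ≤ ξ ∧ ξ ≤ 2 ∧ (z = 0 ∨ z = 1) ∧
        t ≥ 1 - ξ - M * z ∧ ξ ≤ 2 * (1 - z) ∧ val = ξ + 2 * z}
      (min 2 (max 0 (1 - t))) := by
  refine ⟨exists_bigM_feasible_eq_ramp_loss hM, ?_⟩
  rintro v ⟨ξ, z, hξ, -, hz, ht, hstrong, rfl⟩
  exact ramp_loss_le_of_bigM_feasible hξ hz ht hstrong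
end
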